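/- Let R be a commutative ring, M a finitely generated R-module, and suppose there is an exact sequence of R-modules 0 → M → R^g → R^g → M' → 0 for some g ≥ 1 (where the middle map is given by multiplication by an R-linear endomorphism φ of R^g that is injective). Then char_R(M') = det(φ)·R. In particular, if V is a free module of finite rank g over a product of principal ideal domains and φ: V → V is an injective endomorphism, then char_R(coker φ) = det(φ)·R. -/

import Mathlib

open Module

section Defs
variable (R : Type*) [CommRing R]

/-- The `r`-th exterior bi-dual `⋂^r_R M := (⋀^r_R (M^*))^*`, realized canonically as the
module of alternating `R`-multilinear forms on `r` copies of the dual module `M^*`. -/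
abbrev ExtBidual (M : Type*) [AddCommGroup M] [Module R M] (r : ℕ) :=
  (Module.Dual R M) [⋀^Fin r]→ₗ[R] R

/-- Functoriality of the exterior bi-dual. -/
noncomputable def extBidualMap {M N : Type*} [AddCommGroup M] [Module R M]
    [AddCommGroup N] [Module R N] (r : ℕ) (f : M →ₗ[R] N) :
    ExtBidual R M r →ₗ[R] ExtBidual R N r where
  toFun φ := φ.compLinearMap f.dualMap
  map_add' := by intros; ext; rfl
  map_smul' := by intros; ext; rfl

/-- The canonical identification `⋂^s_R (R^s) = R`, given by evaluation at the
standard dual basis. -/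
noncomputable def extEval (s : ℕ) : ExtBidual R (Fin s → R) s →ₗ[R] R where
  toFun φ := φ (fun i => LinearMap.proj i)
  map_add' := by intros; rfl
  map_smul' := by intros; rfl

/-- The characteristic ideal of `M` computed from a presentation `0 → N → R^s → M → 0`
with kernel `N`: the image of the induced map `⋂^s_R N → ⋂^s_R R^s = R`. -/
noncomputable def charIdealAux (s : ℕ) (N : Submodule R (Fin s → R)) : Ideal R :=
  LinearMap.range ((extEval R s) ∘ₗ (extBidualMap R s N.subtype))

/-- The zeroth Fitting ideal of `M` computed from a presentation `0 → N → R^s → M → 0`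
with kernel `N`: the ideal generated by determinants of `s × s` matrices with columns in `N`. -/
def fittIdealAux (s : ℕ) (N : Submodule R (Fin s → R)) : Ideal R :=
  Ideal.span { x | ∃ v : Fin s → (Fin s → R), (∀ i, v i ∈ N) ∧ x = (Matrix.of v).det }
end Defs

/-!
Since `φ` is injective it is an isomorphism `R^g ≃ N := im φ`, so the image of
`⋂^g N → ⋂^g R^g = R` equals the image of `⋂^g(φ) : ⋂^g R^g → ⋂^g R^g` followed by evaluation.
On `⋂^g R^g`, alternating forms of top degree on the free module `(R^g)^*`, the map `⋂^g(φ)` is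
multiplication by `det φ^* = det φ`, and evaluation at the dual basis is onto `R`.
-/

namespace AlternatingMap

variable {R M ι : Type*} [CommRing R] [AddCommGroup M] [Module R M] [Fintype ι] [DecidableEq ι]

theorem compLinearMap_eq_det_smul (b : Basis ι R M) (ψ : M [⋀^ι]→ₗ[R] R) (f : M →ₗ[R] M) :
    ψ.compLinearMap f = LinearMap.det f • ψ := by
  ext v
  rw [ψ.eq_smul_basis_det b]
  simp only [compLinearMap_apply, smul_apply, smul_eq_mul]
  rw [← Function.comp_def, Basis.det_comp]
  ring

end AlternatingMap

theorem Pi.basisFun_dualBasis {R : Type*} [CommRing R] (s : ℕ) (i : Fin s) :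
    (Pi.basisFun R (Fin s)).dualBasis i = LinearMap.proj i := by
  ext j
  simp [Pi.single_apply]

section ExtBidual

variable {R : Type*} [CommRing R]

theorem extBidualMap_comp {M N P : Type*} [AddCommGroup M] [Module R M] [AddCommGroup N]
    [Module R N] [AddCommGroup P] [Module R P] (r : ℕ) (g : N →ₗ[R] P) (f : M →ₗ[R] N) :
    extBidualMap R r (g ∘ₗ f) = extBidualMap R r g ∘ₗ extBidualMap R r f :=
  rfl

theorem extBidualMap_id (M : Type*) [AddCommGroup M] [Module R M] (r : ℕ) :
    extBidualMap R r (LinearMap.id : M →ₗ[R] M) = LinearMap.id :=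
  rfl

theorem extBidualMap_surjective_of_linearEquiv {M N : Type*} [AddCommGroup M] [Module R M]
    [AddCommGroup N] [Module R N] (r : ℕ) (e : M ≃ₗ[R] N) :
    Function.Surjective (extBidualMap R r e.toLinearMap) := fun ψ =>
  ⟨extBidualMap R r e.symm.toLinearMap ψ, by
    rw [← LinearMap.comp_apply, ← extBidualMap_comp, LinearEquiv.comp_symm, extBidualMap_id,
      LinearMap.id_apply]⟩

theorem extBidualMap_apply_eq_det_smul {M : Type*} [AddCommGroup M] [Module R M] {r : ℕ}
    (b : Basis (Fin r) R M) (f : M →ₗ[R] M) (ψ : ExtBidual R M r) :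
    extBidualMap R r f ψ = LinearMap.det f • ψ := by
  have := Module.Free.of_basis b
  have := Module.Finite.of_basis b
  rw [← LinearMap.det_dualMap]
  exact ψ.compLinearMap_eq_det_smul b.dualBasis f.dualMap

theorem extEval_surjective (s : ℕ) : Function.Surjective (extEval R s) := fun c =>
  ⟨c • (Pi.basisFun R (Fin s)).dualBasis.det, by
    change (c • _ : ExtBidual R _ s) (fun i => LinearMap.proj i) = c
    rw [← funext (Pi.basisFun_dualBasis (R := R) s), AlternatingMap.smul_apply, Basis.det_self,
      smul_eq_mul, mul_one]⟩

theorem range_extEval_comp_extBidualMap_eq_span_det (s : ℕ) (f : (Fin s → R) →ₗ[R] (Fin s → R)) :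
    LinearMap.range (extEval R s ∘ₗ extBidualMap R s f) = Ideal.span {LinearMap.det f} := by
  have hcomp : extEval R s ∘ₗ extBidualMap R s f =
      LinearMap.toSpanSingleton R R (LinearMap.det f) ∘ₗ extEval R s := by
    ext ψ
    simp [extBidualMap_apply_eq_det_smul (Pi.basisFun R (Fin s)), mul_comm]
  rw [hcomp, LinearMap.range_comp_of_range_eq_top _
    (LinearMap.range_eq_top.mpr (extEval_surjective s)), ← LinearMap.span_singleton_eq_range]

end ExtBidual

theorem char_coker_eq_det (R : Type*) [CommRing R]
    (g : ℕ)
    (φ : (Fin g → R) →ₗ[R] (Fin g → R)) (hφ : Function.Injective φ) :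
    charIdealAux R g (LinearMap.range φ) = Ideal.span {LinearMap.det φ} := by
  set e := LinearEquiv.ofInjective φ hφ
  have hsubtype : (LinearMap.range φ).subtype = φ ∘ₗ e.symm.toLinearMap := by
    ext n : 1
    exact (LinearEquiv.ofInjective_symm_apply φ n).symm
  rw [charIdealAux, hsubtype, extBidualMap_comp, ← LinearMap.comp_assoc,
    LinearMap.range_comp_of_range_eq_top _
      (LinearMap.range_eq_top.mpr (extBidualMap_surjective_of_linearEquiv g e.symm))]
  exact range_extEval_comp_extBidualMap_eq_span_det g φ
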